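/- Let d ≥ 2, let a ∈ ℝ^d, and let c_{i,j} (i ≠ j) be real constants with c_{i,j} = c_{j,i} ≥ 0 for all i ≠ j. If ξ, μ ∈ Δ_d both satisfy ξ_i = a_i + Σ_{j ≠ i} c_{i,j}/(ξ_i − ξ_j) and μ_i = a_i + Σ_{j ≠ i} c_{i,j}/(μ_i − μ_j) for all i = 1,…,d, then ξ = μ. -/

import Mathlib

/-!
Write `G x i = ∑_{j ≠ i} c i j / (x i - x j)` (`interaction c x i` below). On points ordered
like one another, `G` is monotone decreasing: pairing the terms `(i, j)` and `(j, i)` by the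
symmetry of `c` reduces `∑ i, (ξ i - μ i) * (G ξ i - G μ i)` to a sum of terms
`(p - q) * (c / p - c / q)` with `p, q` of the same sign, and `t ↦ c / t` is antitone on each
half-line. Two solutions satisfy `ξ - μ = G ξ - G μ`, so `∑ i, (ξ i - μ i) ^ 2 ≤ 0`.
-/

open Finset

theorem sub_mul_div_sub_div_nonpos {𝕜 : Type*} [Field 𝕜] [LinearOrder 𝕜] [IsStrictOrderedRing 𝕜]
    {p q c : 𝕜} (hc : 0 ≤ c) (hpq : 0 < p * q) : (p - q) * (c / p - c / q) ≤ 0 := by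
  have hp : p ≠ 0 := left_ne_zero_of_mul hpq.ne'
  have hq : q ≠ 0 := right_ne_zero_of_mul hpq.ne'
  rw [div_sub_div _ _ hp hq, ← mul_div_assoc]
  refine div_nonpos_of_nonpos_of_nonneg ?_ hpq.le
  nlinarith [mul_nonneg hc (sq_nonneg (p - q))]

section OffDiagonal

variable {ι : Type*} [Fintype ι] [DecidableEq ι]

theorem sum_sum_erase_comm {M : Type*} [AddCommMonoid M] (f : ι → ι → M) :
    ∑ i, ∑ j ∈ univ.erase i, f i j = ∑ i, ∑ j ∈ univ.erase i, f j i :=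
  Finset.sum_comm' fun i j => by simp [and_comm, eq_comm]

theorem two_mul_sum_mul_sum_erase_of_antisymm {R : Type*} [CommRing R] {e : ι → ι → R}
    (he : ∀ i j, i ≠ j → e j i = -e i j) (δ : ι → R) :
    2 * ∑ i, δ i * ∑ j ∈ univ.erase i, e i j
      = ∑ i, ∑ j ∈ univ.erase i, (δ i - δ j) * e i j := by
  have hswap : ∑ i, ∑ j ∈ univ.erase i, δ i * e i j
      = ∑ i, ∑ j ∈ univ.erase i, -(δ j * e i j) := by
    rw [sum_sum_erase_comm]
    refine sum_congr rfl fun i _ => sum_congr rfl fun j hj => ?_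
    rw [he j i (ne_of_mem_erase hj), mul_neg, neg_neg]
  calc 2 * ∑ i, δ i * ∑ j ∈ univ.erase i, e i j
      = ∑ i, ∑ j ∈ univ.erase i, δ i * e i j + ∑ i, ∑ j ∈ univ.erase i, δ i * e i j := by
        rw [two_mul]
        simp only [mul_sum]
    _ = ∑ i, ∑ j ∈ univ.erase i, (δ i - δ j) * e i j := by
        nth_rw 2 [hswap]
        simp only [← sum_add_distrib, sub_mul, ← sub_eq_add_neg]

end OffDiagonal

section Interaction

variable {ι 𝕜 : Type*} [Fintype ι] [DecidableEq ι] [Field 𝕜] [LinearOrder 𝕜]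
  [IsStrictOrderedRing 𝕜]

def interaction (c : ι → ι → 𝕜) (x : ι → 𝕜) (i : ι) : 𝕜 :=
  ∑ j ∈ univ.erase i, c i j / (x i - x j)

theorem sum_sub_mul_interaction_sub_nonpos {c : ι → ι → 𝕜}
    (hsymm : ∀ i j, i ≠ j → c i j = c j i) (hnonneg : ∀ i j, i ≠ j → 0 ≤ c i j)
    {ξ μ : ι → 𝕜} (hξμ : ∀ i j, i ≠ j → 0 < (ξ i - ξ j) * (μ i - μ j)) :
    ∑ i, (ξ i - μ i) * (interaction c ξ i - interaction c μ i) ≤ 0 := by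
  set e : ι → ι → 𝕜 := fun i j => c i j / (ξ i - ξ j) - c i j / (μ i - μ j)
  have he : ∀ i j, i ≠ j → e j i = -e i j := fun i j hij => by
    simp only [e, hsymm j i hij.symm, ← neg_sub (ξ i), ← neg_sub (μ i), div_neg]
    ring
  have h2 : 2 * ∑ i, (ξ i - μ i) * (interaction c ξ i - interaction c μ i)
      = ∑ i, ∑ j ∈ univ.erase i, ((ξ i - μ i) - (ξ j - μ j)) * e i j := by
    simp only [interaction, ← sum_sub_distrib]
    exact two_mul_sum_mul_sum_erase_of_antisymm he _
  have hterm : ∀ i, ∀ j ∈ univ.erase i, ((ξ i - μ i) - (ξ j - μ j)) * e i j ≤ 0 := by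
    intro i j hj
    have hij := (ne_of_mem_erase hj).symm
    rw [show (ξ i - μ i) - (ξ j - μ j) = (ξ i - ξ j) - (μ i - μ j) by ring]
    exact sub_mul_div_sub_div_nonpos (hnonneg i j hij) (hξμ i j hij)
  have : 2 * ∑ i, (ξ i - μ i) * (interaction c ξ i - interaction c μ i) ≤ 0 :=
    h2 ▸ sum_nonpos fun i _ => sum_nonpos (hterm i)
  linarith

theorem eq_of_self_sub_interaction_eq {c : ι → ι → 𝕜}
    (hsymm : ∀ i j, i ≠ j → c i j = c j i) (hnonneg : ∀ i j, i ≠ j → 0 ≤ c i j)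
    {ξ μ : ι → 𝕜} (hξμ : ∀ i j, i ≠ j → 0 < (ξ i - ξ j) * (μ i - μ j))
    (h : ∀ i, ξ i - interaction c ξ i = μ i - interaction c μ i) : ξ = μ := by
  have hsq : ∑ i, (ξ i - μ i) ^ 2 ≤ 0 := by
    convert sum_sub_mul_interaction_sub_nonpos hsymm hnonneg hξμ using 2 with i
    rw [sq, show interaction c ξ i - interaction c μ i = ξ i - μ i by linear_combination -h i]
  have hzero := (sum_eq_zero_iff_of_nonneg fun i _ => sq_nonneg (ξ i - μ i)).1
    (le_antisymm hsq (sum_nonneg fun i _ => sq_nonneg _))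
  funext i
  exact sub_eq_zero.1 (pow_eq_zero_iff two_ne_zero |>.1 (hzero i (mem_univ i)))

end Interaction

theorem StrictMono.sub_mul_sub_pos {α 𝕜 : Type*} [LinearOrder α] [Field 𝕜] [LinearOrder 𝕜]
    [IsStrictOrderedRing 𝕜] {ξ μ : α → 𝕜} (hξ : StrictMono ξ) (hμ : StrictMono μ) {i j : α}
    (hij : i ≠ j) : 0 < (ξ i - ξ j) * (μ i - μ j) := by
  rcases hij.lt_or_gt with hlt | hlt
  · exact mul_pos_of_neg_of_neg (sub_neg.2 (hξ hlt)) (sub_neg.2 (hμ hlt))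
  · exact mul_pos (sub_pos.2 (hξ hlt)) (sub_pos.2 (hμ hlt))

theorem strictMono_solution_unique
    (d : ℕ) (a : Fin d → ℝ) (c : Fin d → Fin d → ℝ)
    (hsymm : ∀ i j : Fin d, i ≠ j → c i j = c j i)
    (hnonneg : ∀ i j : Fin d, i ≠ j → 0 ≤ c i j)
    (ξ μ : Fin d → ℝ) (hξ : StrictMono ξ) (hμ : StrictMono μ)
    (hξeq : ∀ i : Fin d, ξ i = a i + ∑ j ∈ Finset.univ.erase i, c i j / (ξ i - ξ j))
    (hμeq : ∀ i : Fin d, μ i = a i + ∑ j ∈ Finset.univ.erase i, c i j / (μ i - μ j)) :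
    ξ = μ := by
  refine eq_of_self_sub_interaction_eq hsymm hnonneg
    (fun i j hij => hξ.sub_mul_sub_pos hμ hij) fun i => ?_
  rw [interaction, interaction]
  linarith [hξeq i, hμeq i]
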